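/- arXiv:2511.17289 — 3 statements merged into one kernel-verified Lean document; each statement's English description precedes it below -/
import Mathlib

section
/- Let k be a field of characteristic 0. If A(T) is an exponential matrix of Mat(n, k[T]), then A(T) = Exp(T·N) for a unique nilpotent matrix N ∈ Mat(n, k), where Exp denotes the matrix exponential (a finite sum since N is nilpotent). -/
/-!
Write `A = ∑ₘ Aₘ Tᵐ` with `Aₘ ∈ Mat(n, k)`. Comparing the coefficients of `T^i T'^j` in
`A(T) A(T') = A(T + T')` gives `C(i+j, j) A_{i+j} = A_i A_j`; with `j = 1` and `char k = 0` this
forces `Aₘ = Nᵐ / m!` for `N = A₁`. As `A` is a polynomial, `Nᵐ = 0` for large `m`, so `N` is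
nilpotent, `Nⁿ = 0` by Cayley–Hamilton, and `A = Exp(T N)`. Conversely `N` is the coefficient of
`T` in `Exp(T N)`, which gives uniqueness.
-/

open Polynomial

/-- `A(T) ∈ Mat(n, k[T])` is an exponential matrix: `A(T)·A(T') = A(T+T')` in
`Mat(n, k[T,T'])` and `A(0) = I_n`. -/
def IsExpMat {k : Type*} [Field k] {n : ℕ}
    (A : Matrix (Fin n) (Fin n) (Polynomial k)) : Prop :=
  A.map (fun q => aeval ((C X + X : Polynomial (Polynomial k))) q) =
    A.map (fun q => aeval ((C X : Polynomial (Polynomial k))) q) *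
      A.map (fun q => aeval (X : Polynomial (Polynomial k)) q) ∧
  A.map (fun q => q.eval 0) = 1

theorem Matrix.pow_card_eq_zero_of_isNilpotent {R ι : Type*} [CommRing R] [IsDomain R]
    [Fintype ι] [DecidableEq ι] {M : Matrix ι ι R} (hM : IsNilpotent M) :
    M ^ Fintype.card ι = 0 := by
  have hcharpoly : M.charpoly = X ^ Fintype.card ι :=
    sub_eq_zero.mp (Matrix.isNilpotent_charpoly_sub_pow_of_isNilpotent hM).eq_zero
  simpa [hcharpoly] using M.aeval_self_charpoly

namespace Polynomial

variable {R : Type*} [CommRing R]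

theorem aeval_C_X (p : R[X]) : aeval (C X : R[X][X]) p = C p := by
  simpa using aeval_algHom_apply (CAlgHom (R := R) (A := R[X])) X p

theorem hasseDeriv_map {S : Type*} [CommRing S] (f : R →+* S) (p : R[X]) (j : ℕ) :
    hasseDeriv j (p.map f) = (hasseDeriv j p).map f := by
  ext i; simp [hasseDeriv_coeff, coeff_map]

theorem coeff_coeff_aeval_C_X_add_X (p : R[X]) (i j : ℕ) :
    ((aeval (C X + X : R[X][X]) p).coeff j).coeff i = ((i + j).choose j : R) * p.coeff (i + j) := by
  have htaylor : aeval (C X + X : R[X][X]) p = taylor X (p.map C) := by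
    rw [taylor_apply, comp, aeval_def, eval₂_map, add_comm]; rfl
  rw [htaylor, taylor_coeff, hasseDeriv_map, eval_map, eval₂_C_X, hasseDeriv_coeff]

theorem coeff_coeff_aeval_C_X_mul_aeval_X (p q : R[X]) (i j : ℕ) :
    ((aeval (C X) p * aeval X q : R[X][X]).coeff j).coeff i = p.coeff i * q.coeff j := by
  rw [aeval_C_X, aeval_X_left_eq_map, coeff_C_mul, coeff_map, algebraMap_eq, coeff_mul_C]

end Polynomial

open scoped Nat

theorem coeff_matPolyEquiv_sum_range_smul_pow {k ι : Type*} [Field k] [Fintype ι] [DecidableEq ι]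
    {M : Matrix ι ι k} {d : ℕ} (hM : M ^ d = 0) (m : ℕ) :
    (matPolyEquiv (∑ i ∈ Finset.range d, (C ((i ! : k)⁻¹) * X ^ i) • (M ^ i).map C)).coeff m =
      (m ! : k)⁻¹ • M ^ m := by
  simp only [map_sum, matPolyEquiv_map_smul, matPolyEquiv_map_C, Polynomial.map_mul, map_C,
    Polynomial.map_pow, map_X, finsetSum_coeff, coeff_mul_C, coeff_C_mul_X_pow, ite_mul, zero_mul,
    ← Algebra.smul_def, Finset.sum_ite_eq, Finset.mem_range]
  split_ifs with hm
  · rfl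
  · rw [pow_eq_zero_of_le (not_lt.mp hm) hM, smul_zero]

namespace IsExpMat

variable {k : Type*} [Field k] {n : ℕ} {A : Matrix (Fin n) (Fin n) k[X]}

theorem coeff_matPolyEquiv_zero (hA : IsExpMat A) : (matPolyEquiv A).coeff 0 = 1 := by
  have heval := matPolyEquiv_eval_eq_map A 0
  rw [map_zero] at heval
  rw [coeff_zero_eq_eval_zero, heval, hA.2]

theorem choose_smul_coeff_matPolyEquiv_add (hA : IsExpMat A) (i j : ℕ) :
    ((i + j).choose j : k) • (matPolyEquiv A).coeff (i + j) =
      (matPolyEquiv A).coeff i * (matPolyEquiv A).coeff j := by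
  ext a b
  have hentry := congr_arg (fun P : k[X][X] => (P.coeff j).coeff i) (congrFun (congrFun hA.1 a) b)
  simp only [Matrix.map_apply, Matrix.mul_apply, finsetSum_coeff,
    coeff_coeff_aeval_C_X_add_X, coeff_coeff_aeval_C_X_mul_aeval_X] at hentry
  simpa [Matrix.mul_apply] using hentry

theorem coeff_matPolyEquiv_eq_inv_factorial_smul_pow [CharZero k] (hA : IsExpMat A) (m : ℕ) :
    (matPolyEquiv A).coeff m = (m ! : k)⁻¹ • (matPolyEquiv A).coeff 1 ^ m := by
  induction m with
  | zero => simp [hA.coeff_matPolyEquiv_zero]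
  | succ m ih =>
    have hsucc := hA.choose_smul_coeff_matPolyEquiv_add m 1
    rw [Nat.choose_one_right, ih, smul_mul_assoc, ← pow_succ] at hsucc
    have hm : ((m + 1 : ℕ) : k) ≠ 0 := Nat.cast_ne_zero.mpr m.succ_ne_zero
    rw [← inv_smul_smul₀ hm ((matPolyEquiv A).coeff (m + 1)), hsucc, smul_smul, Nat.factorial_succ,
      Nat.cast_mul, mul_inv]

theorem isNilpotent_coeff_matPolyEquiv_one [CharZero k] (hA : IsExpMat A) :
    IsNilpotent ((matPolyEquiv A).coeff 1) := by
  set d := (matPolyEquiv A).natDegree + 1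
  refine ⟨d, ?_⟩
  have hcoeff := hA.coeff_matPolyEquiv_eq_inv_factorial_smul_pow d
  rw [coeff_eq_zero_of_natDegree_lt (Nat.lt_succ_self _), eq_comm, smul_eq_zero] at hcoeff
  exact hcoeff.resolve_left (inv_ne_zero (Nat.cast_ne_zero.mpr (Nat.factorial_ne_zero d)))

end IsExpMat

/-- In characteristic zero, every exponential matrix is `Exp(T·N)` for a unique
nilpotent matrix `N` (a finite sum: `N^i = 0` for `i ≥ n`). -/
theorem stmt_4 {k : Type*} [Field k] [CharZero k] {n : ℕ}
    (A : Matrix (Fin n) (Fin n) (Polynomial k)) (hA : IsExpMat A) :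
    ∃! N : Matrix (Fin n) (Fin n) k, IsNilpotent N ∧
      A = ∑ i ∈ Finset.range n,
        (C ((i.factorial : k)⁻¹) * X ^ i) • ((N ^ i).map C) := by
  set N := (matPolyEquiv A).coeff 1
  have hN : IsNilpotent N := hA.isNilpotent_coeff_matPolyEquiv_one
  have hNn : N ^ n = 0 := by simpa using Matrix.pow_card_eq_zero_of_isNilpotent hN
  refine ⟨N, ⟨hN, matPolyEquiv.injective (Polynomial.ext fun m => ?_)⟩, ?_⟩
  · rw [coeff_matPolyEquiv_sum_range_smul_pow hNn, hA.coeff_matPolyEquiv_eq_inv_factorial_smul_pow]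
  · rintro M ⟨hM, rfl⟩
    have hMn : M ^ n = 0 := by simpa using Matrix.pow_card_eq_zero_of_isNilpotent hM
    simp [N, coeff_matPolyEquiv_sum_range_smul_pow hMn]
end

section
/- Let k be an algebraically closed field. If φ, ψ : G_a → GL(n, k) are homomorphisms of algebraic groups with π ∘ φ = π ∘ ψ, where π : GL(n, k) → PGL(n, k) is the quotient map, then φ = ψ. -/
/-!
Write `(φ t)⁻¹ * ψ t` for the discrepancy of the two lifts. Since `π ∘ φ = π ∘ ψ` it is central,
hence a scalar matrix `u(t) • 1`. Because `(φ t)⁻¹ = φ (-t)`, its diagonal entries depend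
polynomially on `t`; so `u` is a polynomial function on `k` without zeros, which over an
algebraically closed field forces it to be constant, equal to `u(0) = 1`.
-/

open Polynomial

/-- `PGL(n, k)`: the quotient of `GL(n, k)` by its subgroup of scalar matrices
(= its center). -/
abbrev PGL (n : ℕ) (k : Type*) [Field k] :=
  GL (Fin n) k ⧸ Subgroup.center (GL (Fin n) k)

/-- The natural quotient homomorphism `π : GL(n, k) → PGL(n, k)`. -/
noncomputable abbrev PGL.mk (n : ℕ) (k : Type*) [Field k] :
    GL (Fin n) k →* PGL n k :=
  QuotientGroup.mk' (Subgroup.center (GL (Fin n) k))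

theorem Polynomial.eval_eq_eval_of_forall_eval_ne_zero {k : Type*} [Field k] [IsAlgClosed k]
    {q : k[X]} (hq : ∀ t, q.eval t ≠ 0) (s t : k) : q.eval s = q.eval t := by
  have hdeg : q.degree = 0 := by
    by_contra hdeg
    obtain ⟨x, hx⟩ := IsAlgClosed.exists_root q hdeg
    exact hq x hx
  rw [eq_C_of_degree_le_zero hdeg.le, eval_C, eval_C]

theorem map_zero_eq_one_of_map_add {A G : Type*} [AddGroup A] [Group G] {f : A → G}
    (hf : ∀ s t, f (s + t) = f s * f t) : f 0 = 1 :=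
  left_eq_mul.mp (by rw [← hf, add_zero] : f 0 = f 0 * f 0)

theorem map_neg_eq_inv_of_map_add {A G : Type*} [AddGroup A] [Group G] {f : A → G}
    (hf : ∀ s t, f (s + t) = f s * f t) (t : A) : f (-t) = (f t)⁻¹ :=
  eq_inv_of_mul_eq_one_right (by rw [← hf, add_neg_cancel, map_zero_eq_one_of_map_add hf])

namespace Matrix

variable {R : Type*} [CommRing R] {l m n : Type*}

def IsPolynomialCurve (f : R → Matrix m n R) : Prop :=
  ∃ A : Matrix m n R[X], ∀ t, f t = A.map (eval t)

theorem IsPolynomialCurve.mul [Fintype m] {f : R → Matrix l m R} {g : R → Matrix m n R}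
    (hf : IsPolynomialCurve f) (hg : IsPolynomialCurve g) :
    IsPolynomialCurve fun t => f t * g t := by
  obtain ⟨A, hA⟩ := hf
  obtain ⟨B, hB⟩ := hg
  exact ⟨A * B, fun t => show f t * g t = _ by rw [hA, hB, ← coe_evalRingHom, Matrix.map_mul]⟩

theorem IsPolynomialCurve.comp_neg {f : R → Matrix m n R} (hf : IsPolynomialCurve f) :
    IsPolynomialCurve fun t => f (-t) := by
  obtain ⟨A, hA⟩ := hf
  refine ⟨A.map (·.comp (-X)), fun t => ?_⟩
  ext i j
  simp [hA]

end Matrix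

theorem Matrix.GeneralLinearGroup.eq_one_of_isPolynomialCurve_of_mem_center {k m : Type*}
    [Field k] [IsAlgClosed k] [Fintype m] [DecidableEq m] {c : k → GL m k}
    (hpoly : IsPolynomialCurve fun t => (c t : Matrix m m k))
    (hcenter : ∀ t, c t ∈ Subgroup.center (GL m k)) (hc0 : c 0 = 1) (t : k) : c t = 1 := by
  obtain ⟨M, hM⟩ := hpoly
  have hentry : ∀ s i j, (M i j).eval s = (c s : Matrix m m k) i j := by simp [hM]
  have hscalar : ∀ s, ∃ u : kˣ, scalar m u = c s := fun s => by
    simpa only [center_eq_range_scalar, MonoidHom.mem_range] using hcenter s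
  choose u hu using hscalar
  have hdiag_ne_zero : ∀ s i, (c s : Matrix m m k) i i ≠ 0 := by
    simp [← hu, coe_scalar]
  have hdiag_eq_one : ∀ i, (c t : Matrix m m k) i i = 1 := fun i => by
    rw [← hentry, eval_eq_eval_of_forall_eval_ne_zero (fun s => hentry s i i ▸ hdiag_ne_zero s i)
      t 0, hentry, hc0, Units.val_one, one_apply_eq]
  ext i j
  have hunit : u t = 1 := by simpa [← hu, coe_scalar] using hdiag_eq_one i
  rw [← hu, hunit, map_one]

/-- If `φ, ψ : 𝔾ₐ → GL(n, k)` are homomorphisms of algebraic groups with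
`π ∘ φ = π ∘ ψ`, then `φ = ψ`. -/
theorem stmt_11 {k : Type*} [Field k] [IsAlgClosed k] {n : ℕ}
    (φ ψ : k → GL (Fin n) k)
    (hφalg : ∃ A : Matrix (Fin n) (Fin n) (Polynomial k), ∀ t : k,
      ((φ t : Matrix (Fin n) (Fin n) k)) = A.map (fun q => q.eval t))
    (hψalg : ∃ B : Matrix (Fin n) (Fin n) (Polynomial k), ∀ t : k,
      ((ψ t : Matrix (Fin n) (Fin n) k)) = B.map (fun q => q.eval t))
    (hφ : ∀ s t, φ (s + t) = φ s * φ t)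
    (hψ : ∀ s t, ψ (s + t) = ψ s * ψ t)
    (h : ∀ t, PGL.mk n k (φ t) = PGL.mk n k (ψ t)) :
    φ = ψ := by
  have hcenter : ∀ t, (φ t)⁻¹ * ψ t ∈ Subgroup.center (GL (Fin n) k) :=
    fun t => QuotientGroup.eq.mp (h t)
  have hpoly : Matrix.IsPolynomialCurve fun t => (((φ t)⁻¹ * ψ t : GL (Fin n) k) :
      Matrix (Fin n) (Fin n) k) := by
    simp_rw [Units.val_mul, ← map_neg_eq_inv_of_map_add hφ]
    exact Matrix.IsPolynomialCurve.mul (Matrix.IsPolynomialCurve.comp_neg hφalg) hψalg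
  have hone : (φ 0)⁻¹ * ψ 0 = 1 := by
    rw [map_zero_eq_one_of_map_add hφ, map_zero_eq_one_of_map_add hψ, inv_one, one_mul]
  funext t
  exact inv_mul_eq_one.mp
    (Matrix.GeneralLinearGroup.eq_one_of_isPolynomialCurve_of_mem_center hpoly hcenter hone t)
end

section
/- Let k be a field of characteristic p > 0 and let ρ₁ = ρ_{N₁,...,N_r} and ρ₂ = ρ_{M₁,...,M_s} be group homomorphisms (Z/pZ)^r → GL(n, k) and (Z/pZ)^s → GL(n, k) with N_r ≠ 0 and M_s ≠ 0 (r, s ≥ 1). If Π_{i=1}^r Exp(T^{p^{i-1}}·N_i) = Π_{j=1}^s Exp(T^{p^{j-1}}·M_j) in Mat(n, k[T]), then r = s and N_i = M_i for all i. -/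
open Polynomial

/-- `Exp(T^m · N) = ∑_{j=0}^{p-1} T^{m j} N^j / j!`. -/
noncomputable def expT (k : Type*) [Field k] (n p m : ℕ)
    (N : Matrix (Fin n) (Fin n) k) : Matrix (Fin n) (Fin n) (Polynomial k) :=
  ∑ j ∈ Finset.range p, (C ((j.factorial : k)⁻¹) * X ^ (m * j)) • ((N ^ j).map C)

/-!
Transport everything along `matPolyEquiv : Mat(n, k[T]) ≃ Mat(n, k)[T]`. The factor
`Exp(T^{p^i} N_i)` is `1 + T^{p^i} N_i + …`, where all further terms have degree divisible by
`p^i` and at most `p^i (p - 1)`. Hence the product of the first `m` factors has degree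
`< p^m`, and its coefficient of `T^{p^i}` is `N_i`: the product of the factors before the
`i`-th has constant term `1` and degree `< p^i`, and the factors after it are
`≡ 1 mod T^{p^i + 1}`. The top coefficient `T^{p^r}` then forces `r = s`, the others `N_i = M_i`.
-/

open Finset

section CoeffMul
variable {R : Type*} [Semiring R] {f g : R[X]}

theorem coeff_mul_eq_coeff_left {e : ℕ} (hg₀ : g.coeff 0 = 1)
    (hg : ∀ b, 0 < b → b ≤ e → g.coeff b = 0) : (f * g).coeff e = f.coeff e := by
  rw [coeff_mul, sum_eq_single (e, 0)]
  · rw [hg₀, mul_one]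
  · rintro ⟨a, b⟩ hab hne
    rw [HasAntidiagonal.mem_antidiagonal] at hab
    rw [hg b (by grind) (by omega), mul_zero]
  · simp

theorem coeff_mul_eq_coeff_zero_mul {d : ℕ} (hf : f.coeff d = 0)
    (hg : ∀ b, 0 < b → b < d → g.coeff b = 0) : (f * g).coeff d = f.coeff 0 * g.coeff d := by
  rw [coeff_mul, sum_eq_single (0, d)]
  · rintro ⟨a, b⟩ hab hne
    rw [HasAntidiagonal.mem_antidiagonal] at hab
    rcases Nat.eq_zero_or_pos b with rfl | hb
    · rw [add_zero] at hab; rw [hab, hf, zero_mul]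
    · rw [hg b hb (by grind), mul_zero]
  · simp

end CoeffMul

section Exp
variable {k : Type*} [Field k] {n p m : ℕ}

theorem matPolyEquiv_expT (N : Matrix (Fin n) (Fin n) k) :
    matPolyEquiv (expT k n p m N) =
      ∑ j ∈ range p, monomial (m * j) (((j.factorial : k)⁻¹) • N ^ j) := by
  simp only [expT, map_sum]
  refine sum_congr rfl fun j _ => ?_
  simp only [matPolyEquiv_map_smul, Polynomial.map_mul, map_C, Polynomial.map_pow, map_X,
    matPolyEquiv_map_C, mul_assoc, X_pow_mul, ← C_mul_X_pow_eq_monomial]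
  rw [← mul_assoc, ← C_mul, ← Algebra.smul_def]

theorem coeff_matPolyEquiv_expT_mul (hm : 0 < m) (N : Matrix (Fin n) (Fin n) k) (j : ℕ) :
    (matPolyEquiv (expT k n p m N)).coeff (m * j) =
      if j < p then ((j.factorial : k)⁻¹) • N ^ j else 0 := by
  simp [matPolyEquiv_expT, finsetSum_coeff, coeff_monomial, Nat.mul_left_cancel_iff hm]

theorem coeff_matPolyEquiv_expT_of_not_dvd (N : Matrix (Fin n) (Fin n) k) {e : ℕ}
    (he : ¬ m ∣ e) : (matPolyEquiv (expT k n p m N)).coeff e = 0 := by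
  rw [matPolyEquiv_expT, finsetSum_coeff]
  exact sum_eq_zero fun j _ => coeff_monomial_of_ne _ fun h => he ⟨j, h⟩

theorem coeff_zero_matPolyEquiv_expT (hp : 0 < p) (hm : 0 < m) (N : Matrix (Fin n) (Fin n) k) :
    (matPolyEquiv (expT k n p m N)).coeff 0 = 1 := by
  simpa [hp] using coeff_matPolyEquiv_expT_mul (p := p) hm N 0

theorem coeff_matPolyEquiv_expT_self (hp : 1 < p) (hm : 0 < m) (N : Matrix (Fin n) (Fin n) k) :
    (matPolyEquiv (expT k n p m N)).coeff m = N := by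
  simpa [hp] using coeff_matPolyEquiv_expT_mul (p := p) hm N 1

theorem coeff_matPolyEquiv_expT_of_lt (N : Matrix (Fin n) (Fin n) k) {b : ℕ} (hb : 0 < b)
    (hbm : b < m) : (matPolyEquiv (expT k n p m N)).coeff b = 0 :=
  coeff_matPolyEquiv_expT_of_not_dvd N (Nat.not_dvd_of_pos_of_lt hb hbm)

theorem natDegree_matPolyEquiv_expT_le (hm : 0 < m) (N : Matrix (Fin n) (Fin n) k) :
    (matPolyEquiv (expT k n p m N)).natDegree ≤ m * (p - 1) := by
  refine natDegree_le_iff_coeff_eq_zero.2 fun e he => ?_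
  by_cases hdvd : m ∣ e
  · obtain ⟨j, rfl⟩ := hdvd
    rw [coeff_matPolyEquiv_expT_mul hm, if_neg]
    exact fun hj => he.not_ge (Nat.mul_le_mul_left m (by omega))
  · exact coeff_matPolyEquiv_expT_of_not_dvd N hdvd

end Exp

noncomputable def expProd (k : Type*) [Field k] (n p : ℕ) {m : ℕ}
    (A : Fin m → Matrix (Fin n) (Fin n) k) : (Matrix (Fin n) (Fin n) k)[X] :=
  matPolyEquiv (List.ofFn fun i : Fin m => expT k n p (p ^ (i : ℕ)) (A i)).prod

section ExpProd
variable {k : Type*} [Field k] {n p : ℕ}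

theorem expProd_succ {m : ℕ} (A : Fin (m + 1) → Matrix (Fin n) (Fin n) k) :
    expProd k n p A = expProd k n p (fun i => A i.castSucc) *
      matPolyEquiv (expT k n p (p ^ m) (A (Fin.last m))) := by
  rw [expProd, List.ofFn_succ', List.concat_eq_append, List.prod_append, List.prod_singleton,
    map_mul]
  simp [expProd]

theorem coeff_zero_expProd (hp : 0 < p) {m : ℕ} (A : Fin m → Matrix (Fin n) (Fin n) k) :
    (expProd k n p A).coeff 0 = 1 := by
  induction m with
  | zero => simp [expProd]
  | succ m ih =>
    rw [expProd_succ, mul_coeff_zero, ih, coeff_zero_matPolyEquiv_expT hp (by positivity), one_mul]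

theorem natDegree_expProd_lt (hp : 0 < p) {m : ℕ} (A : Fin m → Matrix (Fin n) (Fin n) k) :
    (expProd k n p A).natDegree < p ^ m := by
  induction m with
  | zero => simp [expProd]
  | succ m ih =>
    have hlast := natDegree_matPolyEquiv_expT_le (p := p) (pow_pos hp m) (A (Fin.last m))
    have hpow : p ^ (m + 1) = p ^ m + p ^ m * (p - 1) := by
      have := Nat.le_mul_of_pos_right (p ^ m) hp
      rw [pow_succ, Nat.mul_sub_one]
      omega
    rw [expProd_succ]
    exact natDegree_mul_le.trans_lt (by have := ih fun i => A i.castSucc; omega)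

theorem coeff_pow_expProd (hp : 1 < p) {m : ℕ} (A : Fin m → Matrix (Fin n) (Fin n) k)
    (i : Fin m) : (expProd k n p A).coeff (p ^ (i : ℕ)) = A i := by
  induction m with
  | zero => exact i.elim0
  | succ m ih =>
    have hpm : 0 < p ^ m := by positivity
    rw [expProd_succ]
    induction i using Fin.lastCases with
    | last =>
      rw [Fin.val_last, coeff_mul_eq_coeff_zero_mul, coeff_zero_expProd (by omega), one_mul,
        coeff_matPolyEquiv_expT_self hp hpm]
      · exact coeff_eq_zero_of_natDegree_lt (natDegree_expProd_lt (by omega) _)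
      · exact fun b hb hbm => coeff_matPolyEquiv_expT_of_lt _ hb hbm
    | cast j =>
      have hj : p ^ (j : ℕ) < p ^ m := Nat.pow_lt_pow_right hp j.isLt
      rw [Fin.val_castSucc, coeff_mul_eq_coeff_left, ih]
      · exact coeff_zero_matPolyEquiv_expT (by omega) hpm _
      · exact fun b hb hbj => coeff_matPolyEquiv_expT_of_lt _ hb (by omega)

theorem le_of_expProd_eq (hp : 1 < p) {a b : ℕ} {A : Fin (a + 1) → Matrix (Fin n) (Fin n) k}
    {B : Fin (b + 1) → Matrix (Fin n) (Fin n) k} (h : expProd k n p A = expProd k n p B)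
    (hB : B (Fin.last b) ≠ 0) : b ≤ a := by
  by_contra! hab
  apply hB
  rw [← coeff_pow_expProd hp B (Fin.last b), Fin.val_last, ← h]
  refine coeff_eq_zero_of_natDegree_lt ((natDegree_expProd_lt (by omega) A).trans_le ?_)
  exact Nat.pow_le_pow_right (by omega) hab

end ExpProd

/-- Uniqueness of the decomposition: if two products `∏ Exp(T^{p^{i-1}} N_i)` and
`∏ Exp(T^{p^{j-1}} M_j)` with `N_r ≠ 0`, `M_s ≠ 0` agree, then `r = s` and
`N_i = M_i` for all `i`. -/
theorem stmt_18 {k : Type*} [Field k] {p : ℕ} (hp : p.Prime)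
    {n r s : ℕ}
    (N : Fin (r + 1) → Matrix (Fin n) (Fin n) k)
    (M : Fin (s + 1) → Matrix (Fin n) (Fin n) k)
    (hNlast : N (Fin.last r) ≠ 0) (hMlast : M (Fin.last s) ≠ 0)
    (heq : (List.ofFn (fun i : Fin (r + 1) => expT k n p (p ^ (i : ℕ)) (N i))).prod =
      (List.ofFn (fun j : Fin (s + 1) => expT k n p (p ^ (j : ℕ)) (M j))).prod) :
    ∃ h : r = s, ∀ i : Fin (r + 1), N i = M (Fin.cast (by rw [h]) i) := by
  have heq' : expProd k n p N = expProd k n p M := congrArg matPolyEquiv heq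
  obtain rfl : r = s := le_antisymm (le_of_expProd_eq hp.one_lt heq'.symm hNlast)
    (le_of_expProd_eq hp.one_lt heq' hMlast)
  refine ⟨rfl, fun i => ?_⟩
  rw [Fin.cast_eq_self, ← coeff_pow_expProd hp.one_lt N, heq', coeff_pow_expProd hp.one_lt]
end
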